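/- arXiv:1609.05703 — 2 statements merged into one kernel-verified Lean document; each statement's English description precedes it below -/
import Mathlib

section
/- If r : ℝ → ℝ is a nonnegative integrable function with ∫ r = 1 and r is not a.e. zero, then for every nonzero real k, the Fourier transform satisfies |r̂(k)| < 1, where r̂(k) = ∫ e^{-2πikx} r(x) dx. -/
open MeasureTheory Real

/-!
The density `r` turns Lebesgue measure into a probability measure `μ`, and `r̂(k)` is the
`μ`-integral of `x ↦ exp(-2πikx)`, a function of modulus one. Since `ℂ` is strictly convex, such
an integral has modulus `< 1` unless the integrand is `μ`-a.e. constant; for `k ≠ 0` every level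
set of the integrand is countable, hence Lebesgue-null, hence `μ`-null.
-/

section WithDensity

variable {α : Type*} [MeasurableSpace α] {μ : Measure α} {f : α → ℝ}

theorem isProbabilityMeasure_withDensity_ofReal (hf : Integrable f μ) (hf_nonneg : 0 ≤ᵐ[μ] f)
    (hf_one : ∫ x, f x ∂μ = 1) :
    IsProbabilityMeasure (μ.withDensity fun x => ENNReal.ofReal (f x)) := by
  constructor
  rw [withDensity_apply _ MeasurableSet.univ, Measure.restrict_univ,
    ← ofReal_integral_eq_lintegral_ofReal hf hf_nonneg, hf_one, ENNReal.ofReal_one]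

theorem integral_withDensity_ofReal_eq_integral_smul {E : Type*} [NormedAddCommGroup E]
    [NormedSpace ℝ E] (hf : AEMeasurable f μ) (hf_nonneg : 0 ≤ᵐ[μ] f) (g : α → E) :
    ∫ x, g x ∂μ.withDensity (fun x => ENNReal.ofReal (f x)) = ∫ x, f x • g x ∂μ := by
  rw [integral_withDensity_eq_integral_toReal_smul₀ hf.ennreal_ofReal
    (ae_of_all _ fun _ => ENNReal.ofReal_lt_top)]
  refine integral_congr_ae (hf_nonneg.mono fun x hx => ?_)
  simp only [ENNReal.toReal_ofReal hx]

end WithDensity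

theorem norm_integral_lt_of_norm_le_const_of_measure_fiber_eq_zero
    {α E : Type*} [MeasurableSpace α] {μ : Measure α} [IsFiniteMeasure μ] [NeZero μ]
    [NormedAddCommGroup E] [NormedSpace ℝ E] [CompleteSpace E] [StrictConvexSpace ℝ E]
    {f : α → E} {C : ℝ}
    (h_le : ∀ᵐ x ∂μ, ‖f x‖ ≤ C) (h_null : ∀ c, μ (f ⁻¹' {c}) = 0) :
    ‖∫ x, f x ∂μ‖ < μ.real Set.univ * C := by
  refine (ae_eq_const_or_norm_integral_lt_of_norm_le_const h_le).resolve_left fun h_const => ?_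
  obtain ⟨x, hx_eq, hx_ne⟩ := (h_const.and (measure_eq_zero_iff_ae_notMem.mp (h_null _))).exists
  exact hx_ne hx_eq

theorem countable_setOf_cexp_mul_ofReal_eq {a : ℂ} (ha : a ≠ 0) (w : ℂ) :
    {x : ℝ | Complex.exp (a * x) = w}.Countable := by
  rcases Set.eq_empty_or_nonempty {x : ℝ | Complex.exp (a * x) = w} with h | ⟨x₀, hx₀⟩
  · simp [h]
  refine (Set.countable_range fun n : ℤ => (x₀ + n * (2 * π * Complex.I) / a).re).mono ?_
  intro x hx
  obtain ⟨n, hn⟩ := Complex.exp_eq_exp_iff_exists_int.mp (hx.trans hx₀.symm)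
  refine ⟨n, show (_ : ℂ).re = x from ?_⟩
  rw [show (x₀ : ℂ) + n * (2 * π * Complex.I) / a = x by field_simp; linear_combination -hn]
  exact Complex.ofReal_re x

theorem fourier_transform_lt_one_of_ne_zero_general
    (r : ℝ → ℝ) (hnonneg : ∀ x, 0 ≤ r x)
    (hint : Integrable r) (hnorm : ∫ x, r x = 1) :
    ∀ k : ℝ, k ≠ 0 →
      ‖∫ x : ℝ, Complex.exp (-2 * (π : ℂ) * Complex.I * (k : ℂ) * (x : ℂ)) * (r x : ℂ)‖ < 1 := by
  intro k hk
  have hr_nonneg : 0 ≤ᵐ[volume] r := ae_of_all _ hnonneg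
  set μ := volume.withDensity fun x => ENNReal.ofReal (r x)
  have : IsProbabilityMeasure μ := isProbabilityMeasure_withDensity_ofReal hint hr_nonneg hnorm
  have h_freq : -2 * (π : ℂ) * Complex.I * k ≠ 0 := by simp [pi_ne_zero, hk]
  have h_integral : ∫ x : ℝ, Complex.exp (-2 * (π : ℂ) * Complex.I * k * x) * (r x : ℂ) =
      ∫ x, Complex.exp (-2 * (π : ℂ) * Complex.I * k * x) ∂μ := by
    rw [integral_withDensity_ofReal_eq_integral_smul hint.aemeasurable hr_nonneg]
    simp only [Complex.real_smul, mul_comm]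
  rw [h_integral, ← one_mul (1 : ℝ), ← probReal_univ (μ := μ)]
  refine norm_integral_lt_of_norm_le_const_of_measure_fiber_eq_zero
    (ae_of_all _ fun x => ?_) fun w => ?_
  · simp [Complex.norm_exp]
  · exact withDensity_absolutelyContinuous _ _
      ((countable_setOf_cexp_mul_ofReal_eq h_freq w).measure_zero _)

theorem fourier_transform_lt_one_of_ne_zero
    (r : ℝ → ℝ) (hmeas : Measurable r) (hnonneg : ∀ x, 0 ≤ r x)
    (hint : Integrable r) (hnorm : ∫ x, r x = 1)
    (hne : ¬ (r =ᵐ[volume] 0)) :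
    ∀ k : ℝ, k ≠ 0 →
      ‖∫ x : ℝ, Complex.exp (-2 * (π : ℂ) * Complex.I * (k : ℂ) * (x : ℂ)) * (r x : ℂ)‖ < 1 :=
  fourier_transform_lt_one_of_ne_zero_general r hnonneg hint hnorm
end

section
/- Let r : ℝ → ℝ be a nonnegative integrable function with ∫ r = 1, let a, b > 0, and α ∈ ℝ. Then the operator T on L²(ℝ) defined by (Tf)(x) = √(ab) ∫ r(α − a x − b y^{−1}) |y|^{−1} f(y) dy satisfies ‖Tf‖₂ ≤ ‖f‖₂ for all f ∈ L²(ℝ). -/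
/-!
Schur test. Write the kernel as `r(α - a x - b/y) |y|⁻¹ |f y| = (√r · |y|⁻¹) (√r · |f y|)` and apply
Cauchy–Schwarz in `y`. The substitution `u = 1/y` turns `∫ r(c - b/y) y⁻² dy` into
`∫ r(c - b u) du = 1/b`, and integrating the remaining factor over `x` first (Tonelli) gives
`∫ r(α - a x - b/y) dx = 1/a`. Hence `‖Tf‖₂² ≤ ab · (1/b) · (1/a) · ‖f‖₂²`.
-/

open MeasureTheory Set
open scoped ENNReal

theorem lintegral_weighted_mul_sq_le {α : Type*} [MeasurableSpace α] {μ : Measure α}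
    {w P Q : α → ℝ≥0∞} (hw : AEMeasurable w μ) (hP : AEMeasurable P μ) (hQ : AEMeasurable Q μ) :
    (∫⁻ x, w x * P x * Q x ∂μ) ^ 2 ≤ (∫⁻ x, w x * P x ^ 2 ∂μ) * ∫⁻ x, w x * Q x ^ 2 ∂μ := by
  have hsq (z : ℝ≥0∞) : (z ^ (1 / 2 : ℝ)) ^ 2 = z := by
    rw [← ENNReal.rpow_natCast, ← ENNReal.rpow_mul]; norm_num
  have hCS := ENNReal.lintegral_mul_le_Lp_mul_Lq (μ.withDensity w) Real.HolderConjugate.two_two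
    (hP.mono_ac (withDensity_absolutelyContinuous μ w))
    (hQ.mono_ac (withDensity_absolutelyContinuous μ w))
  simp only [ENNReal.rpow_two, Pi.mul_apply] at hCS
  rw [lintegral_withDensity_eq_lintegral_mul₀ hw (g := fun x => P x * Q x) (hP.mul hQ),
    lintegral_withDensity_eq_lintegral_mul₀ hw (hP.pow_const 2),
    lintegral_withDensity_eq_lintegral_mul₀ hw (hQ.pow_const 2)] at hCS
  simp only [Pi.mul_apply, ← mul_assoc] at hCS
  calc _ ≤ _ := pow_le_pow_left' hCS 2
    _ = _ := by rw [mul_pow, hsq, hsq]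

theorem lintegral_sq_lintegral_le_of_schur {α β : Type*} [MeasurableSpace α] [MeasurableSpace β]
    {μ : Measure α} {ν : Measure β} [SFinite μ] [SFinite ν] {W : α → β → ℝ≥0∞}
    (hW : Measurable (Function.uncurry W)) {P g : β → ℝ≥0∞} (hP : AEMeasurable P ν)
    (hg : AEMeasurable g ν) {A B : ℝ≥0∞} (hA : ∀ x, ∫⁻ y, W x y * P y ^ 2 ∂ν ≤ A)
    (hB : ∀ y, ∫⁻ x, W x y ∂μ ≤ B) :
    ∫⁻ x, (∫⁻ y, W x y * P y * g y ∂ν) ^ 2 ∂μ ≤ A * B * ∫⁻ y, g y ^ 2 ∂ν := by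
  have hWg : AEMeasurable (Function.uncurry fun x y => W x y * g y ^ 2) (μ.prod ν) :=
    hW.aemeasurable.mul (hg.pow_const 2).comp_snd
  have hWg_left : AEMeasurable (fun x => ∫⁻ y, W x y * g y ^ 2 ∂ν) μ :=
    hWg.lintegral_prod_right'
  calc ∫⁻ x, (∫⁻ y, W x y * P y * g y ∂ν) ^ 2 ∂μ
      ≤ ∫⁻ x, A * ∫⁻ y, W x y * g y ^ 2 ∂ν ∂μ := lintegral_mono fun x =>
        (lintegral_weighted_mul_sq_le hW.of_uncurry_left.aemeasurable hP hg).trans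
          (mul_le_mul_left (hA x) _)
    _ = A * ∫⁻ y, (∫⁻ x, W x y ∂μ) * g y ^ 2 ∂ν := by
        rw [lintegral_const_mul'' _ hWg_left, lintegral_lintegral_swap hWg]
        simp_rw [lintegral_mul_const'' _ hW.of_uncurry_right.aemeasurable]
    _ ≤ A * ∫⁻ y, B * g y ^ 2 ∂ν := by gcongr with y; exact hB y
    _ = A * B * ∫⁻ y, g y ^ 2 ∂ν := by rw [lintegral_const_mul'' _ (hg.pow_const 2), mul_assoc]

theorem lintegral_comp_const_sub_mul (g : ℝ → ℝ≥0∞) (c : ℝ) {a : ℝ} (ha : a ≠ 0) :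
    ∫⁻ x, g (c - a * x) = ENNReal.ofReal |a|⁻¹ * ∫⁻ u, g u := by
  have hcov := lintegral_image_eq_lintegral_abs_deriv_mul (f := fun x => c - a * x)
    (f' := fun _ => -a) MeasurableSet.univ
    (fun x _ => by
      simpa using (((hasDerivAt_id x).const_mul a).const_sub c).hasDerivWithinAt (s := univ))
    (fun x _ y _ h => mul_left_cancel₀ ha (sub_right_injective h)) g
  rw [image_univ_of_surjective (fun u => ⟨(c - u) / a, by field_simp; ring⟩),
    Measure.restrict_univ, lintegral_const_mul' _ _ ENNReal.ofReal_ne_top] at hcov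
  rw [hcov, ← mul_assoc, ← ENNReal.ofReal_mul (by positivity)]
  simp [ha]

theorem lintegral_comp_inv_mul_enorm_inv_sq (g : ℝ → ℝ≥0∞) :
    ∫⁻ y, g y⁻¹ * ‖y⁻¹‖ₑ ^ 2 = ∫⁻ u, g u := by
  have hcov := lintegral_image_eq_lintegral_abs_deriv_mul (measurableSet_singleton (0 : ℝ)).compl
    (fun x hx => (hasDerivAt_inv hx).hasDerivWithinAt) inv_injective.injOn g
  rw [image_inv_eq_inv, compl_inv, inv_singleton, inv_zero, restrict_compl_singleton] at hcov
  rw [hcov]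
  refine lintegral_congr fun y => ?_
  rw [mul_comm, abs_neg, ← inv_pow, abs_pow, ENNReal.ofReal_pow (abs_nonneg _),
    Real.enorm_eq_ofReal_abs]

theorem lintegral_ofReal_comp_const_sub_mul {r : ℝ → ℝ} (hnonneg : ∀ x, 0 ≤ r x)
    (hint : Integrable r) (hnorm : ∫ x, r x = 1) (c : ℝ) {a : ℝ} (ha : 0 < a) :
    ∫⁻ x, ENNReal.ofReal (r (c - a * x)) = ENNReal.ofReal a⁻¹ := by
  rw [lintegral_comp_const_sub_mul (fun u => ENNReal.ofReal (r u)) c ha.ne',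
    ← ofReal_integral_eq_lintegral_ofReal hint (ae_of_all _ hnonneg), hnorm, abs_of_pos ha,
    ENNReal.ofReal_one, mul_one]

theorem enorm_sq_sqrt_mul_integral_le {α : Type*} [MeasurableSpace α] {μ : Measure α}
    {t : ℝ} (ht : 0 ≤ t) (F : α → ℝ) :
    ‖(Real.sqrt t * ∫ y, F y ∂μ) ^ 2‖ₑ ≤ ENNReal.ofReal t * (∫⁻ y, ‖F y‖ₑ ∂μ) ^ 2 := by
  rw [enorm_pow, enorm_mul, mul_pow, Real.enorm_of_nonneg (Real.sqrt_nonneg _),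
    ← ENNReal.ofReal_pow (Real.sqrt_nonneg _), Real.sq_sqrt ht]
  gcongr
  exact enorm_integral_le_lintegral_enorm F

noncomputable def inversionKernelOperator (r : ℝ → ℝ) (a b α : ℝ) (f : ℝ → ℝ) (x : ℝ) : ℝ :=
  Real.sqrt (a * b) * ∫ y, r (α - a * x - b * y⁻¹) * |y|⁻¹ * f y

theorem lintegral_enorm_sq_inversionKernelOperator_le {r : ℝ → ℝ} (hmeas : Measurable r)
    (hnonneg : ∀ x, 0 ≤ r x) (hint : Integrable r) (hnorm : ∫ x, r x = 1) {a b : ℝ} (α : ℝ)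
    (ha : 0 < a) (hb : 0 < b) {f : ℝ → ℝ} (hf : AEStronglyMeasurable f) :
    ∫⁻ x, ‖inversionKernelOperator r a b α f x ^ 2‖ₑ ≤ ∫⁻ y, ‖f y‖ₑ ^ 2 := by
  set W : ℝ → ℝ → ℝ≥0∞ := fun x y => ENNReal.ofReal (r (α - a * x - b * y⁻¹))
  have hA (x : ℝ) : ∫⁻ y, W x y * ‖y⁻¹‖ₑ ^ 2 ≤ ENNReal.ofReal b⁻¹ := by
    rw [lintegral_comp_inv_mul_enorm_inv_sq (fun u => ENNReal.ofReal (r (α - a * x - b * u))),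
      lintegral_ofReal_comp_const_sub_mul hnonneg hint hnorm _ hb]
  have hB (y : ℝ) : ∫⁻ x, W x y ≤ ENNReal.ofReal a⁻¹ := by
    simp only [W, fun x => sub_right_comm α (a * x) (b * y⁻¹)]
    rw [lintegral_ofReal_comp_const_sub_mul hnonneg hint hnorm _ ha]
  have hpointwise (x : ℝ) : ‖inversionKernelOperator r a b α f x ^ 2‖ₑ
      ≤ ENNReal.ofReal (a * b) * (∫⁻ y, W x y * ‖y⁻¹‖ₑ * ‖f y‖ₑ) ^ 2 := by
    refine (enorm_sq_sqrt_mul_integral_le (by positivity) _).trans_eq ?_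
    simp only [enorm_mul, Real.enorm_of_nonneg (hnonneg _), ← abs_inv, Real.enorm_abs, W]
  calc ∫⁻ x, ‖inversionKernelOperator r a b α f x ^ 2‖ₑ
      ≤ ∫⁻ x, ENNReal.ofReal (a * b) * (∫⁻ y, W x y * ‖y⁻¹‖ₑ * ‖f y‖ₑ) ^ 2 :=
        lintegral_mono hpointwise
    _ ≤ ENNReal.ofReal (a * b) * (ENNReal.ofReal b⁻¹ * ENNReal.ofReal a⁻¹ *
          ∫⁻ y, ‖f y‖ₑ ^ 2) := by
        rw [lintegral_const_mul' _ _ ENNReal.ofReal_ne_top]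
        gcongr
        exact lintegral_sq_lintegral_le_of_schur (by fun_prop) (by fun_prop) hf.enorm hA hB
    _ = ∫⁻ y, ‖f y‖ₑ ^ 2 := by
        rw [← mul_assoc, ← mul_assoc, ← ENNReal.ofReal_mul (by positivity),
          ← ENNReal.ofReal_mul (by positivity)]
        field_simp
        simp

theorem T_operator_L2_contraction
    (r : ℝ → ℝ) (hmeas : Measurable r) (hnonneg : ∀ x, 0 ≤ r x)
    (hint : Integrable r) (hnorm : ∫ x, r x = 1)
    (a b α : ℝ) (ha : 0 < a) (hb : 0 < b)
    (f : ℝ → ℝ) (hf : MeasureTheory.MemLp f 2 (volume : Measure ℝ)) :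
    (∫ x : ℝ, (Real.sqrt (a * b) * ∫ y : ℝ, r (α - a * x - b * y⁻¹) * |y|⁻¹ * f y) ^ 2)
      ≤ ∫ y : ℝ, (f y) ^ 2 := by
  have hf2 : ∫⁻ y, ‖f y‖ₑ ^ 2 = ENNReal.ofReal (∫ y, f y ^ 2) := by
    simpa [sq_abs] using (ofReal_integral_norm_eq_lintegral_enorm hf.integrable_sq).symm
  have hT : ‖∫ x, inversionKernelOperator r a b α f x ^ 2‖ₑ ≤ ENNReal.ofReal (∫ y, f y ^ 2) :=
    (enorm_integral_le_lintegral_enorm _).trans <|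
      (lintegral_enorm_sq_inversionKernelOperator_le hmeas hnonneg hint hnorm α ha hb hf.1).trans_eq
        hf2
  rw [← ofReal_norm, ENNReal.ofReal_le_ofReal_iff (integral_nonneg fun y => sq_nonneg _)] at hT
  exact (le_abs_self _).trans hT
end
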